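/- Let d ≥ 2, let p be a prime, and let G be a closed fractal subgroup of Aut T_d. If H is an open normal subgroup of G that is pro-p, then the self-similar closure of H in G is an open, normal, pro-p subgroup of G. -/

import Mathlib

open scoped Pointwise

namespace TreeDyn

/-- Vertices of the `d`-regular rooted tree: finite words over `{0,…,d-1}`,
with the empty word as root and children of `w` the words `w ++ [x]`. -/
abbrev Vertex (d : ℕ) := List (Fin d)

/-- A function on words is length-preserving and prefix-preserving. -/
def LP (d : ℕ) (f : Vertex d → Vertex d) : Prop :=
  (∀ w : Vertex d, (f w).length = w.length) ∧
    ∀ v w : Vertex d, v <+: w → f v <+: f w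

theorem LP.id' (d : ℕ) : LP d id := ⟨fun _ => rfl, fun _ _ h => h⟩

theorem LP.comp {d : ℕ} {f g : Vertex d → Vertex d} (hf : LP d f) (hg : LP d g) :
    LP d (f ∘ g) :=
  ⟨fun w => (hf.1 (g w)).trans (hg.1 w), fun v w h => hf.2 _ _ (hg.2 _ _ h)⟩

/-- The automorphism group of the rooted `d`-regular tree, realized as the subgroup of
permutations of the vertex set which fix the root and preserve the child relation
(equivalently: length- and prefix-preserving permutations). -/
def treeAut (d : ℕ) : Subgroup (Equiv.Perm (Vertex d)) where
  carrier := {g | LP d ⇑g ∧ LP d ⇑g⁻¹}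
  one_mem' := ⟨LP.id' d, by simpa using LP.id' d⟩
  mul_mem' := by
    rintro a b ⟨ha1, ha2⟩ ⟨hb1, hb2⟩
    refine ⟨?_, ?_⟩
    · simpa [Equiv.Perm.coe_mul] using ha1.comp hb1
    · rw [mul_inv_rev]
      simpa [Equiv.Perm.coe_mul] using hb2.comp ha2
  inv_mem' := by
    rintro a ⟨h1, h2⟩
    exact ⟨h2, by simpa using h1⟩

/-- `Aut T_d`, the automorphism group of the `d`-regular rooted tree. -/
abbrev AutT (d : ℕ) := ↥(treeAut d)

namespace AutT

variable {d : ℕ}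

/-- The underlying permutation of the vertices. -/
def toPerm (g : AutT d) : Equiv.Perm (Vertex d) := g.1

theorem toPerm_mul (g h : AutT d) : (g * h).toPerm = g.toPerm * h.toPerm := rfl

theorem toPerm_inv (g : AutT d) : (g⁻¹).toPerm = (g.toPerm)⁻¹ := rfl

theorem toPerm_one : (1 : AutT d).toPerm = 1 := rfl

theorem length_apply (g : AutT d) (w : Vertex d) : (g.toPerm w).length = w.length :=
  g.2.1.1 w

theorem prefix_apply (g : AutT d) {v w : Vertex d} (h : v <+: w) :
    g.toPerm v <+: g.toPerm w :=
  g.2.1.2 v w h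

theorem take_apply (g : AutT d) (v u : Vertex d) :
    (g.toPerm (v ++ u)).take v.length = g.toPerm v := by
  have h : g.toPerm v <+: g.toPerm (v ++ u) := g.prefix_apply (List.prefix_append v u)
  have h2 := List.prefix_iff_eq_take.mp h
  rw [length_apply] at h2
  exact h2.symm

theorem apply_append (g : AutT d) (v u : Vertex d) :
    g.toPerm (v ++ u) = g.toPerm v ++ (g.toPerm (v ++ u)).drop v.length := by
  conv_lhs => rw [← List.take_append_drop v.length (g.toPerm (v ++ u))]
  rw [take_apply]

/-- The section function: the action of `g` on the subtree over `v`, transported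
to the whole tree. -/
def secFun (g : AutT d) (v : Vertex d) : Vertex d → Vertex d :=
  fun u => (g.toPerm (v ++ u)).drop v.length

theorem secFun_spec (g : AutT d) (v u : Vertex d) :
    g.toPerm (v ++ u) = g.toPerm v ++ secFun g v u :=
  apply_append g v u

theorem secFun_left (g : AutT d) (v u : Vertex d) :
    secFun g⁻¹ (g.toPerm v) (secFun g v u) = u := by
  have h1 := secFun_spec g⁻¹ (g.toPerm v) (secFun g v u)
  rw [← secFun_spec g v u] at h1
  rw [toPerm_inv] at h1
  simp only [Equiv.Perm.inv_def, Equiv.symm_apply_apply] at h1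
  exact (List.append_cancel_left h1).symm

theorem LP_secFun (g : AutT d) (v : Vertex d) : LP d (secFun g v) := by
  constructor
  · intro w
    simp only [secFun, List.length_drop, length_apply, List.length_append]
    omega
  · intro u1 u2 h
    have h2 : g.toPerm (v ++ u1) <+: g.toPerm (v ++ u2) := by
      refine g.prefix_apply ?_
      obtain ⟨t, ht⟩ := h
      exact ⟨t, by rw [List.append_assoc, ht]⟩
    exact h2.drop v.length

/-- The section of the tree automorphism `g` at the vertex `v`: the automorphism `g|_v` with
`g (v ++ u) = g v ++ g|_v u`. -/
def sec (g : AutT d) (v : Vertex d) : AutT d :=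
  ⟨{ toFun := secFun g v
     invFun := secFun g⁻¹ (g.toPerm v)
     left_inv := secFun_left g v
     right_inv := by
       intro u
       have h := secFun_left g⁻¹ (g.toPerm v) u
       rw [inv_inv] at h
       rw [toPerm_inv] at h
       simp only [Equiv.Perm.inv_def, Equiv.symm_apply_apply] at h
       exact h },
   by
     refine ⟨LP_secFun g v, ?_⟩
     have : ⇑(({ toFun := secFun g v
                 invFun := secFun g⁻¹ (g.toPerm v)
                 left_inv := secFun_left g v
                 right_inv := by
                   intro u
                   have h := secFun_left g⁻¹ (g.toPerm v) u
                   rw [inv_inv] at h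
                   rw [toPerm_inv] at h
                   simp only [Equiv.Perm.inv_def, Equiv.symm_apply_apply] at h
                   exact h } : Equiv.Perm (Vertex d))⁻¹) = secFun g⁻¹ (g.toPerm v) := rfl
     rw [this]
     exact LP_secFun g⁻¹ (g.toPerm v)⟩

theorem sec_apply (g : AutT d) (v u : Vertex d) :
    (sec g v).toPerm u = (g.toPerm (v ++ u)).drop v.length := rfl

end AutT

open AutT

/-- The stabilizer of the vertex `v` in `Aut T_d`. -/
def stabT (d : ℕ) (v : Vertex d) : Subgroup (AutT d) where
  carrier := {g | g.toPerm v = v}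
  one_mem' := rfl
  mul_mem' := by
    intro a b ha hb
    show (a * b).toPerm v = v
    rw [toPerm_mul, Equiv.Perm.mul_apply]
    rw [show b.toPerm v = v from hb, show a.toPerm v = v from ha]
  inv_mem' := by
    intro a ha
    show (a⁻¹).toPerm v = v
    rw [toPerm_inv]
    rw [Equiv.Perm.inv_eq_iff_eq]
    exact (show a.toPerm v = v from ha).symm

/-- The self-similarity homomorphism `π_v` from the stabilizer of `v` to `Aut T_d`,
`g ↦ g|_v`. -/
def secHom (d : ℕ) (v : Vertex d) : (stabT d v) →* AutT d where
  toFun g := sec g.1 v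
  map_one' := by
    apply Subtype.ext
    apply Equiv.ext
    intro u
    show ((1 : AutT d).toPerm (v ++ u)).drop v.length = (1 : AutT d).toPerm u
    rw [toPerm_one]
    simp [List.drop_left]
  map_mul' := by
    intro a b
    apply Subtype.ext
    apply Equiv.ext
    intro u
    have hb : (b.1).toPerm v = v := b.2
    show ((a.1 * b.1).toPerm (v ++ u)).drop v.length
        = (sec a.1 v).toPerm ((sec b.1 v).toPerm u)
    rw [toPerm_mul, Equiv.Perm.mul_apply]
    congr 1
    congr 1
    have h := secFun_spec b.1 v u
    rw [hb] at h
    exact h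

/-- The image subgroup `H^v = π_v(H_v)` of the stabilizer of `v` in `H` under the
self-similarity map. -/
def secSG (d : ℕ) (H : Subgroup (AutT d)) (v : Vertex d) : Subgroup (AutT d) :=
  (H.subgroupOf (stabT d v)).map (secHom d v)

/-- A subgroup of `Aut T_d` is self-similar if `H^v ≤ H` for every vertex `v`. -/
def IsSelfSimilar (d : ℕ) (H : Subgroup (AutT d)) : Prop :=
  ∀ v : Vertex d, secSG d H v ≤ H

/-- A subgroup of `Aut T_d` is fractal if `H^v = H` for every vertex `v`. -/
def IsFractal (d : ℕ) (H : Subgroup (AutT d)) : Prop :=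
  ∀ v : Vertex d, secSG d H v = H

end TreeDyn
namespace TreeDyn

open AutT

variable {d : ℕ}

instance : TopologicalSpace (Vertex d) := ⊥
instance : DiscreteTopology (Vertex d) := ⟨rfl⟩

/-- The profinite topology on `Aut T_d`: the topology of pointwise convergence on vertices. -/
instance : TopologicalSpace (AutT d) :=
  TopologicalSpace.induced (fun g : AutT d => (g.toPerm : Vertex d → Vertex d)) inferInstance

theorem continuous_toFun : Continuous fun g : AutT d => (g.toPerm : Vertex d → Vertex d) :=
  continuous_induced_dom

theorem continuous_ev (x : Vertex d) : Continuous fun g : AutT d => g.toPerm x :=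
  (continuous_apply x).comp continuous_toFun

instance : IsTopologicalGroup (AutT d) where
  continuous_mul := by
    apply continuous_induced_rng.2
    show Continuous fun p : AutT d × AutT d => ((p.1 * p.2).toPerm : Vertex d → Vertex d)
    apply continuous_pi
    intro x
    rw [continuous_discrete_rng]
    intro z
    have heq : ((fun p : AutT d × AutT d => (p.1 * p.2).toPerm x)) ⁻¹' {z}
        = ⋃ y : Vertex d, ((fun p : AutT d × AutT d => p.2.toPerm x) ⁻¹' {y})
            ∩ ((fun p : AutT d × AutT d => p.1.toPerm y) ⁻¹' {z}) := by
      ext p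
      simp only [Set.mem_preimage, Set.mem_singleton_iff, Set.mem_iUnion, Set.mem_inter_iff]
      constructor
      · intro h
        exact ⟨p.2.toPerm x, rfl, by rw [toPerm_mul, Equiv.Perm.mul_apply] at h; exact h⟩
      · rintro ⟨y, h1, h2⟩
        rw [toPerm_mul, Equiv.Perm.mul_apply, h1, h2]
    rw [heq]
    apply isOpen_iUnion
    intro y
    exact ((isOpen_discrete _).preimage ((continuous_ev x).comp continuous_snd)).inter
      ((isOpen_discrete _).preimage ((continuous_ev y).comp continuous_fst))
  continuous_inv := by
    apply continuous_induced_rng.2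
    show Continuous fun g : AutT d => ((g⁻¹).toPerm : Vertex d → Vertex d)
    apply continuous_pi
    intro x
    rw [continuous_discrete_rng]
    intro z
    have heq : (fun g : AutT d => (g⁻¹).toPerm x) ⁻¹' {z}
        = (fun g : AutT d => g.toPerm z) ⁻¹' {x} := by
      ext g
      simp only [Set.mem_preimage, Set.mem_singleton_iff]
      rw [toPerm_inv]
      exact Equiv.Perm.inv_eq_iff_eq.trans eq_comm
    rw [heq]
    exact (isOpen_discrete _).preimage (continuous_ev z)

end TreeDyn
namespace TreeDyn

open AutT

/-- `J` is the self-similar closure of `H` in `G`: the smallest closed self-similar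
subgroup of `G` containing `H`. -/
def IsSelfSimilarClosure (d : ℕ) (G H J : Subgroup (AutT d)) : Prop :=
  H ≤ J ∧ J ≤ G ∧ IsClosed (J : Set (AutT d)) ∧ IsSelfSimilar d J ∧
    ∀ J' : Subgroup (AutT d), H ≤ J' → J' ≤ G → IsClosed (J' : Set (AutT d)) →
      IsSelfSimilar d J' → J ≤ J'

/-- The pointwise stabilizer in `Aut T_d` of the vertices at level `m`. -/
def levelStab (d : ℕ) (m : ℕ) : Subgroup (AutT d) where
  carrier := {g | ∀ v : Vertex d, v.length = m → g.toPerm v = v}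
  one_mem' := fun _ _ => rfl
  mul_mem' := by
    intro a b ha hb v hv
    show (a * b).toPerm v = v
    rw [toPerm_mul, Equiv.Perm.mul_apply, hb v hv, ha v hv]
  inv_mem' := by
    intro a ha v hv
    show (a⁻¹).toPerm v = v
    rw [toPerm_inv, Equiv.Perm.inv_eq_iff_eq]
    exact (ha v hv).symm

/-- A topological group is pronilpotent if its quotient by every open normal subgroup
is nilpotent. -/
def Pronilpotent (G : Type*) [Group G] [TopologicalSpace G] : Prop :=
  ∀ (N : Subgroup G) [N.Normal], IsOpen (N : Set G) → Group.IsNilpotent (G ⧸ N)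

/-- A topological group is pro-`p` if its quotient by every open normal subgroup
is a `p`-group. -/
def IsProP (p : ℕ) (G : Type*) [Group G] [TopologicalSpace G] : Prop :=
  ∀ (N : Subgroup G) [N.Normal], IsOpen (N : Set G) → IsPGroup p (G ⧸ N)

/-- A topological group is prosolvable if its quotient by every open normal subgroup
is solvable. -/
def Prosolvable (G : Type*) [Group G] [TopologicalSpace G] : Prop :=
  ∀ (N : Subgroup G) [N.Normal], IsOpen (N : Set G) → IsSolvable (G ⧸ N)

/-- The Frattini subgroup of a topological group: the intersection of its
maximal open (proper) subgroups. -/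
def frattiniOpen (G : Type*) [Group G] [TopologicalSpace G] : Subgroup G :=
  sInf {M : Subgroup G | IsOpen (M : Set G) ∧ M ≠ ⊤ ∧
    ∀ M' : Subgroup G, IsOpen (M' : Set G) → M < M' → M' = ⊤}

end TreeDyn
namespace TreeDyn

open AutT

variable {d : ℕ}

/-- The cyclic successor on `Fin d`. -/
def succFin (x : Fin d) : Fin d :=
  ⟨(x.1 + 1) % d, Nat.mod_lt _ (Nat.lt_of_le_of_lt (Nat.zero_le _) x.2)⟩

/-- The cyclic predecessor on `Fin d`. -/
def predFin (x : Fin d) : Fin d :=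
  ⟨(x.1 + (d - 1)) % d, Nat.mod_lt _ (Nat.lt_of_le_of_lt (Nat.zero_le _) x.2)⟩

theorem predFin_succFin (x : Fin d) : predFin (succFin x) = x := by
  have hd : 0 < d := Nat.lt_of_le_of_lt (Nat.zero_le _) x.2
  apply Fin.ext
  show ((x.1 + 1) % d + (d - 1)) % d = x.1
  rw [Nat.mod_add_mod, show x.1 + 1 + (d - 1) = x.1 + d by omega, Nat.add_mod_right,
    Nat.mod_eq_of_lt x.2]

theorem succFin_predFin (x : Fin d) : succFin (predFin x) = x := by
  have hd : 0 < d := Nat.lt_of_le_of_lt (Nat.zero_le _) x.2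
  apply Fin.ext
  show ((x.1 + (d - 1)) % d + 1) % d = x.1
  rw [Nat.mod_add_mod, show x.1 + (d - 1) + 1 = x.1 + d by omega, Nat.add_mod_right,
    Nat.mod_eq_of_lt x.2]

theorem succFin_val_eq_zero_iff (x : Fin d) : (succFin x).1 = 0 ↔ x.1 + 1 = d := by
  show (x.1 + 1) % d = 0 ↔ x.1 + 1 = d
  by_cases h : x.1 + 1 = d
  · simp [h, Nat.mod_self]
  · rw [Nat.mod_eq_of_lt (by omega)]
    omega

theorem predFin_val_succ_eq_iff (x : Fin d) : (predFin x).1 + 1 = d ↔ x.1 = 0 := by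
  have hd : 0 < d := Nat.lt_of_le_of_lt (Nat.zero_le _) x.2
  show (x.1 + (d - 1)) % d + 1 = d ↔ x.1 = 0
  rcases Nat.eq_zero_or_pos x.1 with h | h
  · rw [h]
    simp only [Nat.zero_add]
    rw [Nat.mod_eq_of_lt (show d - 1 < d by omega)]
    simp only [iff_true, eq_self_iff_true]
    omega
  · rw [show x.1 + (d - 1) = (x.1 - 1) + d by omega, Nat.add_mod_right,
      Nat.mod_eq_of_lt (show x.1 - 1 < d by omega)]
    omega

/-- The odometer function: adds one with carrying, on words read root-first. -/
def odF (d : ℕ) : Vertex d → Vertex d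
  | [] => []
  | x :: u => succFin x :: (if x.1 + 1 = d then odF d u else u)

/-- The inverse odometer function. -/
def odG (d : ℕ) : Vertex d → Vertex d
  | [] => []
  | x :: u => predFin x :: (if x.1 = 0 then odG d u else u)

theorem odG_odF (u : Vertex d) : odG d (odF d u) = u := by
  induction u with
  | nil => rfl
  | cons x t ih =>
    simp only [odF, odG, predFin_succFin]
    by_cases h : x.1 + 1 = d
    · rw [if_pos h, if_pos ((succFin_val_eq_zero_iff x).mpr h), ih]
    · rw [if_neg h, if_neg (fun hc => h ((succFin_val_eq_zero_iff x).mp hc))]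

theorem odF_odG (u : Vertex d) : odF d (odG d u) = u := by
  induction u with
  | nil => rfl
  | cons x t ih =>
    simp only [odF, odG, succFin_predFin]
    by_cases h : x.1 = 0
    · rw [if_pos h, if_pos ((predFin_val_succ_eq_iff x).mpr h), ih]
    · rw [if_neg h, if_neg (fun hc => h ((predFin_val_succ_eq_iff x).mp hc))]

theorem odF_append (a b : Vertex d) :
    odF d (a ++ b) = odF d a ++ (if ∀ x ∈ a, x.1 + 1 = d then odF d b else b) := by
  induction a with
  | nil => simp [odF]
  | cons x t ih =>
    by_cases h : x.1 + 1 = d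
    · by_cases h2 : ∀ y ∈ t, y.1 + 1 = d
      · have hall : ∀ y ∈ x :: t, y.1 + 1 = d := by
          intro y hy
          rcases List.mem_cons.mp hy with rfl | hy
          · exact h
          · exact h2 y hy
        simp only [List.cons_append, List.append_eq, odF, if_pos h, if_pos h2, if_pos hall, ih]
      · have hall : ¬ ∀ y ∈ x :: t, y.1 + 1 = d :=
          fun hc => h2 fun y hy => hc y (List.mem_cons_of_mem x hy)
        simp only [List.cons_append, List.append_eq, odF, if_pos h, if_neg h2, if_neg hall, ih]
    · have hall : ¬ ∀ y ∈ x :: t, y.1 + 1 = d :=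
        fun hc => h (hc x (List.mem_cons_self))
      simp only [List.cons_append, List.append_eq, odF, if_neg h, if_neg hall]

theorem odG_append (a b : Vertex d) :
    odG d (a ++ b) = odG d a ++ (if ∀ x ∈ a, x.1 = 0 then odG d b else b) := by
  induction a with
  | nil => simp [odG]
  | cons x t ih =>
    by_cases h : x.1 = 0
    · by_cases h2 : ∀ y ∈ t, y.1 = 0
      · have hall : ∀ y ∈ x :: t, y.1 = 0 := by
          intro y hy
          rcases List.mem_cons.mp hy with rfl | hy
          · exact h
          · exact h2 y hy
        simp only [List.cons_append, List.append_eq, odG, if_pos h, if_pos h2, if_pos hall, ih]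
      · have hall : ¬ ∀ y ∈ x :: t, y.1 = 0 :=
          fun hc => h2 fun y hy => hc y (List.mem_cons_of_mem x hy)
        simp only [List.cons_append, List.append_eq, odG, if_pos h, if_neg h2, if_neg hall, ih]
    · have hall : ¬ ∀ y ∈ x :: t, y.1 = 0 :=
        fun hc => h (hc x (List.mem_cons_self))
      simp only [List.cons_append, List.append_eq, odG, if_neg h, if_neg hall]

theorem LP_odF : LP d (odF d) := by
  constructor
  · intro w
    induction w with
    | nil => rfl
    | cons x t ih =>
      simp only [odF]
      by_cases h : x.1 + 1 = d <;> simp [h, ih]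
  · intro v w h
    obtain ⟨t, rfl⟩ := h
    rw [odF_append]
    exact ⟨_, rfl⟩

theorem LP_odG : LP d (odG d) := by
  constructor
  · intro w
    induction w with
    | nil => rfl
    | cons x t ih =>
      simp only [odG]
      by_cases h : x.1 = 0 <;> simp [h, ih]
  · intro v w h
    obtain ⟨t, rfl⟩ := h
    rw [odG_append]
    exact ⟨_, rfl⟩

/-- The standard odometer as a permutation of the vertices. -/
def odPerm (d : ℕ) : Equiv.Perm (Vertex d) where
  toFun := odF d
  invFun := odG d
  left_inv := odG_odF
  right_inv := odF_odG

/-- The standard odometer `ω ∈ Aut T_d` (adds one to a `d`-adic digit string,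
with carrying). -/
def od (d : ℕ) : AutT d :=
  ⟨odPerm d, ⟨LP_odF, LP_odG⟩⟩

/-- The standard `d`-cycle `σ = (0 1 … d-1)` on the first level. -/
def sigmaFin (d : ℕ) : Equiv.Perm (Fin d) where
  toFun := succFin
  invFun := predFin
  left_inv := predFin_succFin
  right_inv := succFin_predFin

end TreeDyn

/-!
Among the subgroups of `J` that are normalized by `G` and whose images in all congruence
quotients `Aut T_d ⧸ St(m)` are `p`-groups there is a largest one, `pCore p G J`: modulo `St(m)`
a join of `p`-groups normalized by a common subgroup containing them is a `p`-group. It is closed,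
because `St(m)` is open, so a subgroup and its closure have the same congruence images. It is
self-similar, because `G^v = G` normalizes the sections of a `G`-normalized subgroup and sections
at `v` of elements of `St(|v| + m)` lie in `St(m)`. Minimality of the self-similar closure then
forces `J = pCore p G J`, which is normalized by `G` and pro-`p`; openness is inherited from `H`.
-/

section PGroup

open Subgroup

variable {G : Type*} [Group G] {p : ℕ}

theorem isPGroup_quotient_iff {N : Subgroup G} [N.Normal] :
    IsPGroup p (G ⧸ N) ↔ ∀ g : G, ∃ k : ℕ, g ^ p ^ k ∈ N := by
  refine ⟨fun h g => ?_, fun h q => ?_⟩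
  · obtain ⟨k, hk⟩ := h (g : G ⧸ N)
    exact ⟨k, (QuotientGroup.eq_one_iff _).mp (by rwa [QuotientGroup.mk_pow])⟩
  · obtain ⟨g, rfl⟩ := QuotientGroup.mk_surjective q
    obtain ⟨k, hk⟩ := h g
    exact ⟨k, by rw [← QuotientGroup.mk_pow, QuotientGroup.eq_one_iff]; exact hk⟩

theorem isPGroup_map_mk'_iff {N : Subgroup G} [N.Normal] {K : Subgroup G} :
    IsPGroup p (K.map (QuotientGroup.mk' N)) ↔ ∀ g ∈ K, ∃ k : ℕ, g ^ p ^ k ∈ N := by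
  refine ⟨fun h g hg => ?_, fun h q => ?_⟩
  · obtain ⟨k, hk⟩ := h ⟨_, mem_map_of_mem _ hg⟩
    refine ⟨k, (QuotientGroup.eq_one_iff _).mp ?_⟩
    simpa using congrArg Subtype.val hk
  · obtain ⟨g, hg, hgq⟩ := mem_map.mp q.2
    obtain ⟨k, hk⟩ := h g hg
    refine ⟨k, Subtype.ext ?_⟩
    rw [coe_pow, ← hgq, ← map_pow]
    exact (QuotientGroup.eq_one_iff _).mpr hk

theorem IsPGroup.iSup_of_le_normalizer {ι : Type*} {M : Subgroup G} {K : ι → Subgroup G}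
    (hK : ∀ i, IsPGroup p (K i)) (hKM : ∀ i, K i ≤ M)
    (hMK : ∀ i, M ≤ normalizer (K i : Set G)) :
    IsPGroup p (⨆ i, K i : Subgroup G) := by
  classical
  have hfin : ∀ s : Finset ι, IsPGroup p (⨆ i ∈ s, K i : Subgroup G) := by
    intro s
    induction s using Finset.induction_on with
    | empty =>
      rw [show (⨆ i ∈ (∅ : Finset ι), K i) = ⊥ by simp]
      exact IsPGroup.of_bot
    | insert a s _ ih =>
      rw [Finset.iSup_insert, sup_comm]
      exact ih.to_sup_of_normal_right' (hK a) ((iSup₂_le fun i _ => hKM i).trans (hMK a))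
  have hdir : Directed (· ≤ ·) fun s : Finset ι => (⨆ i ∈ s, K i : Subgroup G) :=
    Monotone.directed_le fun s t hst => biSup_mono fun i hi => Finset.mem_of_subset hst hi
  rintro ⟨g, hg⟩
  rw [iSup_eq_iSup_finset, mem_iSup_of_directed hdir] at hg
  obtain ⟨s, hs⟩ := hg
  obtain ⟨k, hk⟩ := hfin s ⟨g, hs⟩
  exact ⟨k, Subtype.ext (by simpa using congrArg Subtype.val hk)⟩

end PGroup

section TopologicalGroup

variable {G : Type*} [TopologicalSpace G] [Group G] [IsTopologicalGroup G]

theorem Subgroup.normalizer_le_normalizer_topologicalClosure (K : Subgroup G) :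
    Subgroup.normalizer (K : Set G) ≤ Subgroup.normalizer (K.topologicalClosure : Set G) := by
  have hconj : ∀ g ∈ Subgroup.normalizer (K : Set G), ∀ x ∈ K.topologicalClosure,
      g * x * g⁻¹ ∈ K.topologicalClosure := fun g hg x hx =>
    map_mem_closure (f := fun y => g * y * g⁻¹) (IsTopologicalGroup.continuous_conj g) hx
      fun y hy => (Subgroup.mem_normalizer_iff.mp hg y).mp hy
  intro g hg
  refine Subgroup.mem_normalizer_iff.mpr fun x => ⟨hconj g hg x, fun hx => ?_⟩
  simpa [mul_assoc] using hconj g⁻¹ (inv_mem hg) _ hx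

theorem Subgroup.map_mk'_topologicalClosure {N : Subgroup G} [N.Normal]
    (hN : IsOpen (N : Set G)) (K : Subgroup G) :
    K.topologicalClosure.map (QuotientGroup.mk' N) = K.map (QuotientGroup.mk' N) := by
  have := QuotientGroup.discreteTopology hN
  refine le_antisymm ?_ (Subgroup.map_mono K.le_topologicalClosure)
  rintro _ ⟨x, hx, rfl⟩
  have hx' : (x : G ⧸ N) ∈ _root_.closure (((↑) : G → G ⧸ N) '' K) :=
    map_mem_closure QuotientGroup.continuous_mk hx (Set.mapsTo_image _ _)
  rwa [closure_discrete] at hx'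

end TopologicalGroup

namespace TreeDyn

open AutT Subgroup Topology

variable {d : ℕ}

instance normal_levelStab (m : ℕ) : (levelStab d m).Normal where
  conj_mem n hn g v hv := by
    have hv' : ((g⁻¹ : AutT d).toPerm v).length = m := by rw [length_apply, hv]
    change g.toPerm (n.toPerm ((g⁻¹).toPerm v)) = v
    rw [hn _ hv', toPerm_inv, Equiv.Perm.inv_def, Equiv.apply_symm_apply]

theorem isOpen_levelStab (m : ℕ) : IsOpen (levelStab d m : Set (AutT d)) := by
  have h : (levelStab d m : Set (AutT d)) =
      ⋂ v ∈ {v : Vertex d | v.length = m}, (fun g : AutT d => g.toPerm v) ⁻¹' {v} := by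
    ext g
    simp only [Set.mem_iInter, Set.mem_ofPred_eq, SetLike.mem_coe]
    rfl
  rw [h]
  exact (List.finite_length_eq (Fin d) m).isOpen_biInter fun v _ =>
    (isOpen_discrete _).preimage (continuous_ev v)

theorem levelStab_apply_of_length_le (hd : 0 < d) {m : ℕ} {g : AutT d} (hg : g ∈ levelStab d m)
    {v : Vertex d} (hv : v.length ≤ m) : g.toPerm v = v := by
  -- `v` is a prefix of a vertex of level `m`, which `g` fixes.
  set w := v ++ List.replicate (m - v.length) (⟨0, hd⟩ : Fin d)
  have hw : g.toPerm w = w :=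
    hg w (by simp only [w, List.length_append, List.length_replicate]; omega)
  rw [← take_apply g v, hw, List.take_left]

theorem exists_levelStab_subset (hd : 0 < d) {U : Set (AutT d)} (hU : U ∈ 𝓝 1) :
    ∃ m, (levelStab d m : Set (AutT d)) ⊆ U := by
  obtain ⟨W, hW, hWU⟩ := (mem_nhds_induced _ _ _).mp hU
  rw [nhds_pi, Filter.mem_pi'] at hW
  obtain ⟨I, t, ht, hIW⟩ := hW
  refine ⟨I.sup List.length, fun g hg => hWU (hIW fun v hv => ?_)⟩
  change g.toPerm v ∈ t v
  rw [levelStab_apply_of_length_le hd hg (Finset.le_sup hv)]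
  exact mem_of_mem_nhds (ht v)

theorem sec_mem_levelStab {g : AutT d} {v : Vertex d} {m : ℕ}
    (hg : g ∈ levelStab d (v.length + m)) : sec g v ∈ levelStab d m := by
  intro u hu
  rw [sec_apply, hg (v ++ u) (by simp [hu]), List.drop_left]

theorem secSG_mono {K K' : Subgroup (AutT d)} (h : K ≤ K') (v : Vertex d) :
    secSG d K v ≤ secSG d K' v :=
  map_mono (comap_mono h)

theorem le_normalizer_secSG {G K : Subgroup (AutT d)} (hG : IsFractal d G)
    (hGK : G ≤ normalizer (K : Set (AutT d))) (v : Vertex d) :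
    G ≤ normalizer (secSG d K v : Set (AutT d)) :=
  calc G = secSG d G v := (hG v).symm
    _ ≤ (normalizer (K.subgroupOf (stabT d v) : Set (stabT d v))).map (secHom d v) :=
      map_mono ((comap_mono hGK).trans (le_normalizer_comap _))
    _ ≤ normalizer (secSG d K v : Set (AutT d)) := le_normalizer_map _

def HasPCongruenceQuotients (p : ℕ) (K : Subgroup (AutT d)) : Prop :=
  ∀ m, IsPGroup p (K.map (QuotientGroup.mk' (levelStab d m)))

namespace HasPCongruenceQuotients

variable {p : ℕ}

theorem secSG {K : Subgroup (AutT d)} (h : HasPCongruenceQuotients p K) (v : Vertex d) :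
    HasPCongruenceQuotients p (secSG d K v) := by
  intro m
  rw [isPGroup_map_mk'_iff]
  rintro _ ⟨g, hg, rfl⟩
  obtain ⟨k, hk⟩ := isPGroup_map_mk'_iff.mp (h (v.length + m)) g hg
  exact ⟨k, by rw [← map_pow]; exact sec_mem_levelStab hk⟩

theorem topologicalClosure {K : Subgroup (AutT d)} (h : HasPCongruenceQuotients p K) :
    HasPCongruenceQuotients p K.topologicalClosure := fun m => by
  rw [map_mk'_topologicalClosure (isOpen_levelStab m)]
  exact h m

theorem iSup {ι : Type*} {G : Subgroup (AutT d)} {K : ι → Subgroup (AutT d)}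
    (hKG : ∀ i, K i ≤ G) (hGK : ∀ i, G ≤ normalizer (K i : Set (AutT d)))
    (h : ∀ i, HasPCongruenceQuotients p (K i)) : HasPCongruenceQuotients p (⨆ i, K i) := by
  intro m
  rw [Subgroup.map_iSup]
  exact IsPGroup.iSup_of_le_normalizer (fun i => h i m) (fun i => map_mono (hKG i))
    fun i => (map_mono (hGK i)).trans (le_normalizer_map _)

end HasPCongruenceQuotients

theorem isProP_iff_hasPCongruenceQuotients (hd : 0 < d) {p : ℕ} {K : Subgroup (AutT d)} :
    IsProP p K ↔ HasPCongruenceQuotients p K := by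
  simp only [HasPCongruenceQuotients, isPGroup_map_mk'_iff]
  constructor
  · intro h m g hg
    have hopen : IsOpen ((levelStab d m).subgroupOf K : Set K) :=
      (isOpen_levelStab m).preimage continuous_subtype_val
    obtain ⟨k, hk⟩ := isPGroup_quotient_iff.mp (h _ hopen) ⟨g, hg⟩
    exact ⟨k, mem_subgroupOf.mp hk⟩
  · intro h N _ hN
    obtain ⟨U, hU, hUN⟩ := (mem_nhds_subtype _ _ _).mp (hN.mem_nhds N.one_mem)
    obtain ⟨m, hm⟩ := exists_levelStab_subset hd hU
    refine isPGroup_quotient_iff.mpr fun g => ?_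
    obtain ⟨k, hk⟩ := h m g g.2
    exact ⟨k, hUN (hm (by simpa using hk))⟩

section PCore

variable {p : ℕ} {G J : Subgroup (AutT d)}

def pCore (p : ℕ) (G J : Subgroup (AutT d)) : Subgroup (AutT d) :=
  sSup {K | K ≤ J ∧ G ≤ normalizer (K : Set (AutT d)) ∧ HasPCongruenceQuotients p K}

theorem le_pCore {K : Subgroup (AutT d)} (hKJ : K ≤ J) (hGK : G ≤ normalizer (K : Set (AutT d)))
    (hK : HasPCongruenceQuotients p K) : K ≤ pCore p G J :=
  le_sSup ⟨hKJ, hGK, hK⟩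

theorem pCore_le : pCore p G J ≤ J :=
  sSup_le fun _ hK => hK.1

theorem le_normalizer_pCore : G ≤ normalizer (pCore p G J : Set (AutT d)) := by
  rw [pCore, sSup_eq_iSup']
  exact (le_iInf fun K => K.2.2.1).trans (iInf_normalizer_le_normalizer_iSup _)

theorem hasPCongruenceQuotients_pCore (hJG : J ≤ G) :
    HasPCongruenceQuotients p (pCore p G J) := by
  rw [pCore, sSup_eq_iSup']
  exact .iSup (fun K => K.2.1.trans hJG) (fun K => K.2.2.1) fun K => K.2.2.2

theorem isClosed_pCore (hJ : IsClosed (J : Set (AutT d))) (hJG : J ≤ G) :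
    IsClosed (pCore p G J : Set (AutT d)) := by
  have h : (pCore p G J).topologicalClosure ≤ pCore p G J :=
    le_pCore (topologicalClosure_minimal _ pCore_le hJ)
      (le_normalizer_pCore.trans (normalizer_le_normalizer_topologicalClosure _))
      (hasPCongruenceQuotients_pCore hJG).topologicalClosure
  exact isClosed_of_closure_subset (by rwa [← topologicalClosure_coe])

theorem isSelfSimilar_pCore (hG : IsFractal d G) (hJ : IsSelfSimilar d J) (hJG : J ≤ G) :
    IsSelfSimilar d (pCore p G J) := fun v =>
  le_pCore ((secSG_mono pCore_le v).trans (hJ v)) (le_normalizer_secSG hG le_normalizer_pCore v)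
    ((hasPCongruenceQuotients_pCore hJG).secSG v)

end PCore

theorem proP_selfSimilarClosure_general (d : ℕ) (hd : 2 ≤ d) (p : ℕ)
    (G : Subgroup (AutT d))
    (hGfractal : IsFractal d G)
    (H : Subgroup (AutT d)) (hHG : H ≤ G)
    (hHopen : IsOpen ((H.subgroupOf G) : Set G))
    (hHnormal : (H.subgroupOf G).Normal)
    (hHp : IsProP p H) :
    ∀ J : Subgroup (AutT d), IsSelfSimilarClosure d G H J →
      IsOpen ((J.subgroupOf G) : Set G) ∧ (J.subgroupOf G).Normal ∧ IsProP p J := by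
  rintro J ⟨hHJ, hJG, hJclosed, hJss, hJmin⟩
  have hd0 : 0 < d := by omega
  have hGH : G ≤ normalizer (H : Set (AutT d)) :=
    (normal_subgroupOf_iff_le_normalizer hHG).mp hHnormal
  have hJ : J = pCore p G J :=
    le_antisymm
      (hJmin _ (le_pCore hHJ hGH ((isProP_iff_hasPCongruenceQuotients hd0).mp hHp))
        (pCore_le.trans hJG) (isClosed_pCore hJclosed hJG)
        (isSelfSimilar_pCore hGfractal hJss hJG))
      pCore_le
  refine ⟨isOpen_mono (comap_mono hHJ) hHopen, (normal_subgroupOf_iff_le_normalizer hJG).mpr ?_,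
    (isProP_iff_hasPCongruenceQuotients hd0).mpr ?_⟩
  · rw [hJ]
    exact le_normalizer_pCore
  · rw [hJ]
    exact hasPCongruenceQuotients_pCore hJG

/-- **Open normal pro-`p` subgroups are self-similarity-closed.**
Let `d ≥ 2`, let `p` be a prime, and let `G` be a closed fractal subgroup of `Aut T_d`.
If `H` is an open normal subgroup of `G` that is pro-`p`, then the self-similar closure
of `H` in `G` is an open, normal, pro-`p` subgroup of `G`. -/
theorem proP_selfSimilarClosure (d : ℕ) (hd : 2 ≤ d) (p : ℕ) (hp : p.Prime)
    (G : Subgroup (AutT d)) (hGclosed : IsClosed (G : Set (AutT d)))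
    (hGfractal : IsFractal d G)
    (H : Subgroup (AutT d)) (hHG : H ≤ G)
    (hHopen : IsOpen ((H.subgroupOf G) : Set G))
    (hHnormal : (H.subgroupOf G).Normal)
    (hHp : IsProP p H) :
    ∀ J : Subgroup (AutT d), IsSelfSimilarClosure d G H J →
      IsOpen ((J.subgroupOf G) : Set G) ∧ (J.subgroupOf G).Normal ∧ IsProP p J :=
  proP_selfSimilarClosure_general d hd p G hGfractal H hHG hHopen hHnormal hHp

end TreeDyn
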